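/- Let Σ be a 2-chromatic signed simple graph (χ(Σ) = 2). Then M(Σ) = 1 and m(Σ) = 0 if and only if Σ is disconnected and every edge of Σ is negative. -/

import Mathlib

/-- A signed simple graph: two edge-disjoint simple graphs on the same vertex set,
the positive edges and the negative edges. -/
structure SignedGraph (V : Type*) where
  pos : SimpleGraph V
  neg : SimpleGraph V
  disjoint : ∀ a b : V, ¬ (pos.Adj a b ∧ neg.Adj a b)

/-- The color set of size `n`: `{±1, …, ±k}` if `n = 2k`, and `{0, ±1, …, ±k}` if `n = 2k+1`. -/
noncomputable def signedColorSet (n : ℕ) : Finset ℤ :=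
  if Even n then (Finset.Icc (-((n / 2 : ℕ) : ℤ)) ((n / 2 : ℕ) : ℤ)).erase 0
  else Finset.Icc (-((n / 2 : ℕ) : ℤ)) ((n / 2 : ℕ) : ℤ)

/-- A proper coloration of a signed graph using the color set of size `n`. -/
def IsProperColoration {V : Type*} (S : SignedGraph V) (n : ℕ) (κ : V → ℤ) : Prop :=
  (∀ v, κ v ∈ signedColorSet n) ∧
  (∀ a b, S.pos.Adj a b → κ a ≠ κ b) ∧
  (∀ a b, S.neg.Adj a b → κ a ≠ -κ b)

/-- The chromatic number: the least size of a color set admitting a proper coloration. -/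
noncomputable def sChromaticNumber {V : Type*} (S : SignedGraph V) : ℕ :=
  sInf {n : ℕ | ∃ κ : V → ℤ, IsProperColoration S n κ}

/-- A minimal coloration: a proper coloration using the color set of size `χ(Σ)`. -/
def IsMinimalColoration {V : Type*} (S : SignedGraph V) (κ : V → ℤ) : Prop :=
  IsProperColoration S (sChromaticNumber S) κ

/-- The deficiency of a coloration: the number of unused colors from the color set of size `n`. -/
noncomputable def sDeficiency {V : Type*} [Fintype V] (n : ℕ) (κ : V → ℤ) : ℕ :=
  (signedColorSet n \ Finset.image κ Finset.univ).card

/-- Maximum deficiency over minimal colorations. -/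
noncomputable def maxDef {V : Type*} [Fintype V] (S : SignedGraph V) : ℕ :=
  sSup {d : ℕ | ∃ κ : V → ℤ, IsMinimalColoration S κ ∧ sDeficiency (sChromaticNumber S) κ = d}

/-- Minimum deficiency over minimal colorations. -/
noncomputable def minDef {V : Type*} [Fintype V] (S : SignedGraph V) : ℕ :=
  sInf {d : ℕ | ∃ κ : V → ℤ, IsMinimalColoration S κ ∧ sDeficiency (sChromaticNumber S) κ = d}

/-- A stable cover of the positive edges: a vertex cover of `E⁺` that is stable in `Σ`. -/
def IsStableCover {V : Type*} (S : SignedGraph V) (T : Set V) : Prop :=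
  (∀ a b, S.pos.Adj a b → a ∈ T ∨ b ∈ T) ∧
  (∀ a ∈ T, ∀ b ∈ T, ¬ S.pos.Adj a b ∧ ¬ S.neg.Adj a b)

/-- An edge `ab` has exactly one endpoint in `A`. -/
def crossing {V : Type*} (A : Set V) (a b : V) : Prop := ¬ ((a ∈ A) ↔ (b ∈ A))

/-- Switching a signed graph at a vertex set `A`: the sign of every edge with exactly one
endpoint in `A` is negated. -/
def SignedGraph.switch {V : Type*} (S : SignedGraph V) (A : Set V) : SignedGraph V where
  pos :=
    { Adj := fun a b => (S.pos.Adj a b ∧ ¬ crossing A a b) ∨ (S.neg.Adj a b ∧ crossing A a b)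
      symm := by
        constructor
        intro a b h
        unfold crossing at *
        rcases h with ⟨h1, h2⟩ | ⟨h1, h2⟩
        · exact Or.inl ⟨h1.symm, by tauto⟩
        · exact Or.inr ⟨h1.symm, by tauto⟩
      loopless := by
        constructor
        intro a h
        rcases h with ⟨h1, _⟩ | ⟨_, h2⟩
        · exact S.pos.irrefl h1
        · exact h2 Iff.rfl }
  neg :=
    { Adj := fun a b => (S.neg.Adj a b ∧ ¬ crossing A a b) ∨ (S.pos.Adj a b ∧ crossing A a b)
      symm := by
        constructor
        intro a b h
        unfold crossing at *
        rcases h with ⟨h1, h2⟩ | ⟨h1, h2⟩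
        · exact Or.inl ⟨h1.symm, by tauto⟩
        · exact Or.inr ⟨h1.symm, by tauto⟩
      loopless := by
        constructor
        intro a h
        rcases h with ⟨h1, _⟩ | ⟨_, h2⟩
        · exact S.neg.irrefl h1
        · exact h2 Iff.rfl }
  disjoint := by
    intro a b h
    have := S.disjoint a b
    tauto

/-- General proper coloration with an arbitrary color set `C ⊆ ℤ`. -/
def IsProperWith {V : Type*} (S : SignedGraph V) (C : Set ℤ) (κ : V → ℤ) : Prop :=
  (∀ v, κ v ∈ C) ∧
  (∀ a b, S.pos.Adj a b → κ a ≠ κ b) ∧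
  (∀ a b, S.neg.Adj a b → κ a ≠ -κ b)

open Classical in
/-- The coloration switching equivalent to `κ` via `A`: negate the colors on `A`. -/
noncomputable def switchColor {V : Type*} (A : Set V) (κ : V → ℤ) : V → ℤ :=
  fun v => if v ∈ A then -κ v else κ v

/-- The adjacency of the forcing graph `F(Σ)` for the matching `m`:
a directed edge from `x` to `y` whenever `x ȳ` is a negative edge. -/
def ForcingAdj {V : Type*} (S : SignedGraph V) (m : V → V) (x y : V) : Prop :=
  S.neg.Adj x (m y)

/-!
With the two colors `±1`, a negative edge forces equal colors at its ends and a positive edge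
opposite ones. A minimal coloration thus has deficiency `1` exactly when it is constant, which is
proper iff there are no positive edges, and deficiency `0` otherwise. When all edges are negative,
the proper colorations are those constant on connected components, so a non-constant one exists
iff `Σ` is disconnected.
-/

lemma mem_signedColorSet_two {x : ℤ} : x ∈ signedColorSet 2 ↔ x = -1 ∨ x = 1 := by
  simp only [signedColorSet, if_pos even_two, Finset.mem_erase, Finset.mem_Icc]
  omega

section SignedColoring

variable {V : Type*}

lemma nonempty_of_sChromaticNumber_ne_zero {S : SignedGraph V} (h : sChromaticNumber S ≠ 0) :
    Nonempty V := by
  by_contra hV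
  rw [not_nonempty_iff] at hV
  exact h (Nat.sInf_eq_zero.2 <| .inl ⟨isEmptyElim, isEmptyElim, isEmptyElim, isEmptyElim⟩)

lemma exists_isProperColoration_sChromaticNumber {S : SignedGraph V}
    (h : sChromaticNumber S ≠ 0) : ∃ κ, IsProperColoration S (sChromaticNumber S) κ :=
  Nat.sInf_mem (Nat.nonempty_of_pos_sInf (Nat.pos_of_ne_zero h))

section Deficiency

variable [Fintype V] {κ : V → ℤ}

lemma sDeficiency_two_le_one [Nonempty V] (hκ : ∀ v, κ v ∈ signedColorSet 2) :
    sDeficiency 2 κ ≤ 1 := by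
  classical
  obtain ⟨v⟩ := ‹Nonempty V›
  have hcard : (signedColorSet 2).card = 2 := by
    rw [show signedColorSet 2 = {-1, 1} by ext; simp [mem_signedColorSet_two]]; rfl
  calc sDeficiency 2 κ ≤ (signedColorSet 2 \ {κ v}).card :=
        Finset.card_le_card (Finset.sdiff_subset_sdiff subset_rfl (by simp))
    _ = 1 := by rw [Finset.sdiff_singleton_eq_erase, Finset.card_erase_of_mem (hκ v), hcard]

lemma sDeficiency_eq_zero_iff {n : ℕ} :
    sDeficiency n κ = 0 ↔ ∀ c ∈ signedColorSet n, ∃ v, κ v = c := by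
  classical
  simp [sDeficiency, Finset.sdiff_eq_empty_iff_subset, Finset.subset_iff]

lemma sDeficiency_two_eq_zero_iff (hκ : ∀ v, κ v ∈ signedColorSet 2) :
    sDeficiency 2 κ = 0 ↔ ∃ a b, κ a ≠ κ b := by
  simp only [sDeficiency_eq_zero_iff, mem_signedColorSet_two]
  constructor
  · intro hsurj
    obtain ⟨a, ha⟩ := hsurj (-1) (.inl rfl)
    obtain ⟨b, hb⟩ := hsurj 1 (.inr rfl)
    exact ⟨a, b, by omega⟩
  · rintro ⟨a, b, hab⟩ c hc
    have ha := mem_signedColorSet_two.1 (hκ a)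
    have hb := mem_signedColorSet_two.1 (hκ b)
    by_cases hca : κ a = c
    · exact ⟨a, hca⟩
    · exact ⟨b, by omega⟩

lemma sDeficiency_two_eq_one_iff [Nonempty V] (hκ : ∀ v, κ v ∈ signedColorSet 2) :
    sDeficiency 2 κ = 1 ↔ ∀ a b, κ a = κ b := by
  have hle := sDeficiency_two_le_one hκ
  constructor
  · intro h1 a b
    by_contra hab
    have := (sDeficiency_two_eq_zero_iff hκ).2 ⟨a, b, hab⟩
    omega
  · intro hconst
    have : sDeficiency 2 κ ≠ 0 := fun h0 =>
      let ⟨a, b, hab⟩ := (sDeficiency_two_eq_zero_iff hκ).1 h0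
      hab (hconst a b)
    omega

end Deficiency

namespace IsProperColoration

variable {S : SignedGraph V} {κ : V → ℤ}

lemma eq_of_neg_adj (hκ : IsProperColoration S 2 κ) {a b : V} (hab : S.neg.Adj a b) :
    κ a = κ b := by
  have ha := mem_signedColorSet_two.1 (hκ.1 a)
  have hb := mem_signedColorSet_two.1 (hκ.1 b)
  have := hκ.2.2 a b hab
  omega

lemma eq_of_neg_reachable (hκ : IsProperColoration S 2 κ) {a b : V}
    (hab : S.neg.Reachable a b) : κ a = κ b := by
  obtain ⟨p⟩ := hab
  induction p with
  | nil => rfl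
  | cons hadj _ ih => exact (hκ.eq_of_neg_adj hadj).trans ih

lemma pos_eq_bot_of_const {n : ℕ} (hκ : IsProperColoration S n κ) (hconst : ∀ a b, κ a = κ b) :
    S.pos = ⊥ := by
  ext a b
  simpa using fun hab => hκ.2.1 a b hab (hconst a b)

end IsProperColoration

section AllNegative

variable {S : SignedGraph V}

lemma isProperColoration_const (hpos : S.pos = ⊥) {n : ℕ} {c : ℤ} (hc : c ∈ signedColorSet n)
    (hc0 : c ≠ 0) : IsProperColoration S n (fun _ => c) :=
  ⟨fun _ => hc, fun a b hab => by simp [hpos] at hab, fun _ _ _ => by dsimp only; omega⟩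

open Classical in
lemma isProperColoration_two_reachable (hpos : S.pos = ⊥) (u : V) :
    IsProperColoration S 2 (fun x => if S.neg.Reachable u x then 1 else -1) := by
  refine ⟨fun x => ?_, fun a b hab => by simp [hpos] at hab, fun a b hab => ?_⟩
  · dsimp only
    split_ifs <;> simp [mem_signedColorSet_two]
  · have hiff : S.neg.Reachable u a ↔ S.neg.Reachable u b :=
      ⟨fun h => h.trans hab.reachable, fun h => h.trans hab.symm.reachable⟩
    simp only [hiff]
    split_ifs <;> norm_num

variable [Fintype V] [Nonempty V]

lemma exists_sDeficiency_two_eq_one_iff :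
    (∃ κ, IsProperColoration S 2 κ ∧ sDeficiency 2 κ = 1) ↔ S.pos = ⊥ := by
  constructor
  · rintro ⟨κ, hκ, hdef⟩
    exact hκ.pos_eq_bot_of_const ((sDeficiency_two_eq_one_iff hκ.1).1 hdef)
  · intro hpos
    have h1 : (1 : ℤ) ∈ signedColorSet 2 := mem_signedColorSet_two.2 (.inr rfl)
    exact ⟨_, isProperColoration_const hpos h1 one_ne_zero,
      (sDeficiency_two_eq_one_iff fun _ => h1).2 fun _ _ => rfl⟩

lemma exists_sDeficiency_two_eq_zero_iff (hpos : S.pos = ⊥) :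
    (∃ κ, IsProperColoration S 2 κ ∧ sDeficiency 2 κ = 0) ↔ ¬ S.neg.Connected := by
  rw [SimpleGraph.connected_iff, SimpleGraph.Preconnected]
  simp only [and_iff_left ‹Nonempty V›, not_forall]
  constructor
  · rintro ⟨κ, hκ, hdef⟩
    obtain ⟨a, b, hab⟩ := (sDeficiency_two_eq_zero_iff hκ.1).1 hdef
    exact ⟨a, b, fun hr => hab (hκ.eq_of_neg_reachable hr)⟩
  · rintro ⟨u, v, huv⟩
    have hκ := isProperColoration_two_reachable hpos u
    exact ⟨_, hκ, (sDeficiency_two_eq_zero_iff hκ.1).2 ⟨u, v, by simp [huv]⟩⟩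

end AllNegative

section TwoChromatic

variable [Fintype V] {S : SignedGraph V}

lemma maxDef_eq_one_iff (h : sChromaticNumber S = 2) :
    maxDef S = 1 ↔ ∃ κ, IsProperColoration S 2 κ ∧ sDeficiency 2 κ = 1 := by
  have := nonempty_of_sChromaticNumber_ne_zero (h ▸ two_ne_zero)
  obtain ⟨κ₀, hκ₀⟩ := exists_isProperColoration_sChromaticNumber (h ▸ two_ne_zero)
  unfold maxDef IsMinimalColoration
  rw [h] at hκ₀ ⊢
  set D := {d | ∃ κ, IsProperColoration S 2 κ ∧ sDeficiency 2 κ = d}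
  have hD : D.Nonempty := ⟨_, κ₀, hκ₀, rfl⟩
  have hle : ∀ d ∈ D, d ≤ 1 := by
    rintro d ⟨κ, hκ, rfl⟩
    exact sDeficiency_two_le_one hκ.1
  constructor
  · intro h1
    exact h1 ▸ Nat.sSup_mem hD ⟨1, hle⟩
  · intro h1
    exact le_antisymm (csSup_le hD hle) (le_csSup ⟨1, hle⟩ h1)

lemma minDef_eq_zero_iff (h : sChromaticNumber S = 2) :
    minDef S = 0 ↔ ∃ κ, IsProperColoration S 2 κ ∧ sDeficiency 2 κ = 0 := by
  obtain ⟨κ₀, hκ₀⟩ := exists_isProperColoration_sChromaticNumber (h ▸ two_ne_zero)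
  unfold minDef IsMinimalColoration
  rw [h] at hκ₀ ⊢
  have hD : {d | ∃ κ, IsProperColoration S 2 κ ∧ sDeficiency 2 κ = d}.Nonempty :=
    ⟨_, κ₀, hκ₀, rfl⟩
  rw [Nat.sInf_eq_zero, or_iff_left hD.ne_empty]
  rfl

end TwoChromatic

end SignedColoring

/-- For a 2-chromatic signed simple graph,
`M(Σ) = 1` and `m(Σ) = 0` iff `Σ` is disconnected and all edges are negative. -/
theorem two_chromatic_def_mixed {V : Type*} [Fintype V] (S : SignedGraph V)
    (h : sChromaticNumber S = 2) :
    (maxDef S = 1 ∧ minDef S = 0) ↔ (¬ (S.pos ⊔ S.neg).Connected ∧ S.pos = ⊥) := by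
  have := nonempty_of_sChromaticNumber_ne_zero (h ▸ two_ne_zero)
  rw [maxDef_eq_one_iff h, minDef_eq_zero_iff h, exists_sDeficiency_two_eq_one_iff]
  constructor
  · rintro ⟨hpos, h0⟩
    refine ⟨?_, hpos⟩
    rw [hpos, bot_sup_eq]
    exact (exists_sDeficiency_two_eq_zero_iff hpos).1 h0
  · rintro ⟨hdis, hpos⟩
    rw [hpos, bot_sup_eq] at hdis
    exact ⟨hpos, (exists_sDeficiency_two_eq_zero_iff hpos).2 hdis⟩
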